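/- In a group, suppose [x, z]^{p^i} = 1, x^t = x^p, and [[x, z^t], x] = 1. Then [x, z^t]^{p^{i+1}} = 1. -/

import Mathlib

/-- The commutator `[a,b] = a⁻¹b⁻¹ab`. -/
def br {G : Type*} [Group G] (a b : G) : G := a⁻¹ * b⁻¹ * a * b

/-- Conjugation `a^b = b⁻¹ab`. -/
def cnj {G : Type*} [Group G] (a b : G) : G := b⁻¹ * a * b

section

variable {G : Type*} [Group G]

lemma cnj_eq_conj_inv (a g : G) : cnj a g = MulAut.conj g⁻¹ a := by
  simp [cnj]

lemma cnj_pow (a g : G) (n : ℕ) : cnj a g ^ n = cnj (a ^ n) g := by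
  simp only [cnj_eq_conj_inv, map_pow]

lemma cnj_one (g : G) : cnj 1 g = 1 := by
  simp [cnj]

lemma br_cnj_cnj (a b g : G) : br (cnj a g) (cnj b g) = cnj (br a b) g := by
  simp only [br, cnj_eq_conj_inv, map_mul, map_inv]

lemma br_eq_one_iff_commute {a b : G} : br a b = 1 ↔ Commute a b := by
  rw [br, commute_iff_eq, mul_assoc, mul_assoc, inv_mul_eq_one, eq_inv_mul_iff_mul_eq, eq_comm]

lemma br_pow_left_of_commute {x w : G} (hc : Commute x (br x w)) (n : ℕ) :
    br (x ^ n) w = br x w ^ n := by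
  induction n with
  | zero => simp [br]
  | succ n ih =>
    calc br (x ^ (n + 1)) w = x⁻¹ * br (x ^ n) w * x * br x w := by
          simp only [br, pow_succ]; group
      _ = x⁻¹ * (br x w ^ n * x) * br x w := by rw [ih]; group
      _ = x⁻¹ * (x * br x w ^ n) * br x w := by rw [(hc.pow_right n).eq]
      _ = br x w ^ (n + 1) := by group

end

theorem commutator_power_step_general {G : Type*} [Group G] (p : ℕ) (i : ℕ)
    (x z t : G) (h1 : br x z ^ p ^ i = 1) (h2 : cnj x t = x ^ p)
    (h3 : br (br x (cnj z t)) x = 1) :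
    br x (cnj z t) ^ p ^ (i + 1) = 1 := by
  have hc : Commute x (br x (cnj z t)) := (br_eq_one_iff_commute.mp h3).symm
  have hp : br x (cnj z t) ^ p = cnj (br x z) t := by
    rw [← br_pow_left_of_commute hc, ← h2, br_cnj_cnj]
  rw [pow_succ', pow_mul, hp, cnj_pow, h1, cnj_one]

/-- in a group, if `[x,z]^{p^i} = 1`, `x^t = x^p` and `[[x,z^t],x] = 1`,
then `[x, z^t]^{p^{i+1}} = 1`. -/
theorem commutator_power_step {G : Type*} [Group G] (p : ℕ) (hp : 0 < p) (i : ℕ)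
    (x z t : G) (h1 : br x z ^ p ^ i = 1) (h2 : cnj x t = x ^ p)
    (h3 : br (br x (cnj z t)) x = 1) :
    br x (cnj z t) ^ p ^ (i + 1) = 1 :=
  commutator_power_step_general p i x z t h1 h2 h3
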